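/- (Differentiability and smoothness of the μ-smooth approximation.) Let d : ℕ, L ≥ 0 and μ : ℝ, and let f : EuclideanSpace ℝ (Fin d) → ℝ have L-Lipschitz gradient. Define f_μ(x) := ∫ f(x + μ • u) ∂γ_d(u). Then f_μ is differentiable at every x with gradient ∇f_μ(x) = ∫ ∇f(x + μ • u) ∂γ_d(u), and this gradient is L-Lipschitz: ‖∇f_μ(x) − ∇f_μ(y)‖ ≤ L·‖x − y‖ for all x, y. In particular, f_μ also has L-Lipschitz gradient. -/

import Mathlib

open MeasureTheory RealInnerProductSpace

/-- The standard Gaussian measure on `EuclideanSpace ℝ (Fin d)`, i.e. the product of `d`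
copies of the real standard Gaussian measure. -/
noncomputable def stdGaussian (d : ℕ) : Measure (EuclideanSpace ℝ (Fin d)) :=
  Measure.map (WithLp.toLp 2) (Measure.pi (fun _ : Fin d => ProbabilityTheory.gaussianReal 0 1))

/-!
A function with `L`-Lipschitz gradient satisfies the second-order Taylor bound
`|f z - f x - ⟪∇f x, z - x⟫| ≤ L ‖z - x‖²`. Averaging this bound at the points `x + μ • u`,
`z + μ • u` over `u` gives the same bound for `f_μ`, with `∫ ∇f (x + μ • u)` in place of `∇f x`,
and hence that gradient. Averaging translates of an `L`-Lipschitz map keeps it `L`-Lipschitz.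
All integrals exist because the standard Gaussian has a finite second moment.
-/

open Metric NNReal

section Taylor

variable {E F : Type*} [NormedAddCommGroup E] [NormedSpace ℝ E]
  [NormedAddCommGroup F] [NormedSpace ℝ F] {K : ℝ≥0}

theorem norm_image_sub_sub_fderiv_le {f : E → F} (hf : Differentiable ℝ f)
    (hK : LipschitzWith K (fderiv ℝ f)) (x z : E) :
    ‖f z - f x - fderiv ℝ f x (z - x)‖ ≤ K * ‖z - x‖ ^ 2 := by
  have hbound : ∀ w ∈ closedBall x ‖z - x‖, ‖fderiv ℝ f w - fderiv ℝ f x‖ ≤ K * ‖z - x‖ :=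
    fun w hw => (hK.norm_sub_le w x).trans (by gcongr; exact mem_closedBall_iff_norm.1 hw)
  calc ‖f z - f x - fderiv ℝ f x (z - x)‖ ≤ K * ‖z - x‖ * ‖z - x‖ :=
        (convex_closedBall x _).norm_image_sub_le_of_norm_hasFDerivWithin_le'
          (fun w _ => (hf w).hasFDerivAt.hasFDerivWithinAt) hbound
          (mem_closedBall_self (norm_nonneg _)) (mem_closedBall_iff_norm.2 le_rfl)
    _ = K * ‖z - x‖ ^ 2 := by ring

end Taylor

section Gradient

variable {E : Type*} [NormedAddCommGroup E] [InnerProductSpace ℝ E] [CompleteSpace E]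
  {K : ℝ≥0} {f : E → ℝ}

theorem abs_sub_sub_inner_gradient_le (hf : Differentiable ℝ f)
    (hK : LipschitzWith K (gradient f)) (x z : E) :
    |f z - f x - ⟪gradient f x, z - x⟫| ≤ K * ‖z - x‖ ^ 2 := by
  have hK' : LipschitzWith K (fderiv ℝ f) := by
    rw [← toDual_comp_gradient]
    simpa using (InnerProductSpace.toDual ℝ E).lipschitz.comp hK
  rw [inner_gradient_left, ← Real.norm_eq_abs]
  exact norm_image_sub_sub_fderiv_le hf hK' x z

theorem hasGradientAt_of_abs_sub_sub_inner_le {F : E → ℝ} {g x : E} {C : ℝ}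
    (h : ∀ y, |F y - F x - ⟪g, y - x⟫| ≤ C * ‖y - x‖ ^ 2) : HasGradientAt F g x := by
  rw [hasGradientAt_iff_isLittleO]
  refine (Asymptotics.IsBigO.of_bound C (Filter.Eventually.of_forall fun y => ?_))
    |>.trans_isLittleO (Asymptotics.isLittleO_pow_sub_sub x one_lt_two)
  simpa [Real.norm_eq_abs] using h y

end Gradient

section Smoothing

variable {Ω E F : Type*} [MeasurableSpace Ω] {P : Measure Ω} {s : Ω → E} {K : ℝ≥0}

section Normed

variable [NormedAddCommGroup E] [NormedAddCommGroup F]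

theorem LipschitzWith.integrable_comp_add [IsFiniteMeasure P] {g : E → F}
    (hg : LipschitzWith K g) (hs : Integrable s P) (x : E) :
    Integrable (fun ω => g (x + s ω)) P := by
  refine ((integrable_const ‖g x‖).add (hs.norm.const_mul K)).mono'
    (hg.continuous.comp_aestronglyMeasurable (hs.1.const_add x))
    (Filter.Eventually.of_forall fun ω => ?_)
  calc ‖g (x + s ω)‖ ≤ ‖g x‖ + ‖g (x + s ω) - g x‖ := norm_le_insert' _ _
    _ ≤ ‖g x‖ + K * ‖s ω‖ := by
        gcongr; simpa using hg.norm_sub_le (x + s ω) x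

theorem LipschitzWith.integral_comp_add [NormedSpace ℝ F] [IsProbabilityMeasure P] {g : E → F}
    (hg : LipschitzWith K g) (hs : Integrable s P) :
    LipschitzWith K (fun x => ∫ ω, g (x + s ω) ∂P) := by
  refine LipschitzWith.of_dist_le_mul fun x y => ?_
  rw [dist_eq_norm, dist_eq_norm, ← integral_sub (hg.integrable_comp_add hs x)
    (hg.integrable_comp_add hs y)]
  simpa using norm_integral_le_of_norm_le_const (μ := P) (C := K * ‖x - y‖)
    (Filter.Eventually.of_forall fun ω => by simpa using hg.norm_sub_le (x + s ω) (y + s ω))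

end Normed

variable [NormedAddCommGroup E] [InnerProductSpace ℝ E] [CompleteSpace E] {f : E → ℝ}

theorem integrable_comp_add_of_lipschitzWith_gradient [IsFiniteMeasure P]
    (hf : Differentiable ℝ f) (hK : LipschitzWith K (gradient f)) (hs : MemLp s 2 P) (x : E) :
    Integrable (fun ω => f (x + s ω)) P := by
  have hs1 : Integrable s P := hs.integrable one_le_two
  have hs2 : Integrable (fun ω => ‖s ω‖ ^ 2) P := hs.integrable_norm_pow two_ne_zero
  refine (((integrable_const |f x|).add (hs1.norm.const_mul ‖gradient f x‖)).add
    (hs2.const_mul K)).mono' (hf.continuous.comp_aestronglyMeasurable (hs.1.const_add x))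
    (Filter.Eventually.of_forall fun ω => ?_)
  have htaylor := abs_sub_sub_inner_gradient_le hf hK x (x + s ω)
  have hinner := abs_real_inner_le_norm (gradient f x) (s ω)
  rw [add_sub_cancel_left] at htaylor
  simp only [Real.norm_eq_abs, Pi.add_apply]
  calc |f (x + s ω)|
      = |f x + ⟪gradient f x, s ω⟫ + (f (x + s ω) - f x - ⟪gradient f x, s ω⟫)| := by ring_nf
    _ ≤ |f x| + |⟪gradient f x, s ω⟫| + |f (x + s ω) - f x - ⟪gradient f x, s ω⟫| :=
        abs_add_three _ _ _
    _ ≤ |f x| + ‖gradient f x‖ * ‖s ω‖ + K * ‖s ω‖ ^ 2 := by gcongr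

theorem abs_integral_comp_add_sub_sub_inner_le [IsProbabilityMeasure P]
    (hf : Differentiable ℝ f) (hK : LipschitzWith K (gradient f)) (hs : MemLp s 2 P) (x y : E) :
    |∫ ω, f (y + s ω) ∂P - ∫ ω, f (x + s ω) ∂P - ⟪∫ ω, gradient f (x + s ω) ∂P, y - x⟫|
      ≤ K * ‖y - x‖ ^ 2 := by
  have hf_int := integrable_comp_add_of_lipschitzWith_gradient hf hK hs
  have hg_int := hK.integrable_comp_add (hs.integrable one_le_two) x
  have hinner :
      ⟪∫ ω, gradient f (x + s ω) ∂P, y - x⟫ = ∫ ω, ⟪gradient f (x + s ω), y - x⟫ ∂P := by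
    rw [real_inner_comm, ← integral_inner hg_int]
    simp_rw [real_inner_comm (y - x)]
  have hdiff_int : Integrable (fun ω => f (y + s ω) - f (x + s ω)) P := (hf_int y).sub (hf_int x)
  rw [hinner, ← integral_sub (hf_int y) (hf_int x),
    ← integral_sub hdiff_int (hg_int.inner_const _)]
  have hpoint : ∀ ω, ‖f (y + s ω) - f (x + s ω) - ⟪gradient f (x + s ω), y - x⟫‖
      ≤ K * ‖y - x‖ ^ 2 := fun ω => by
    simpa only [Real.norm_eq_abs, add_sub_add_right_eq_sub] using
      abs_sub_sub_inner_gradient_le hf hK (x + s ω) (y + s ω)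
  simpa only [Real.norm_eq_abs, probReal_univ, mul_one] using
    norm_integral_le_of_norm_le_const (μ := P) (Filter.Eventually.of_forall hpoint)

theorem hasGradientAt_integral_comp_add [IsProbabilityMeasure P]
    (hf : Differentiable ℝ f) (hK : LipschitzWith K (gradient f)) (hs : MemLp s 2 P) (x : E) :
    HasGradientAt (fun y => ∫ ω, f (y + s ω) ∂P) (∫ ω, gradient f (x + s ω) ∂P) x :=
  hasGradientAt_of_abs_sub_sub_inner_le (abs_integral_comp_add_sub_sub_inner_le hf hK hs x)

end Smoothing

instance isProbabilityMeasure_stdGaussian (d : ℕ) : IsProbabilityMeasure (stdGaussian d) := by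
  rw [stdGaussian, ProbabilityTheory.map_pi_eq_stdGaussian]
  infer_instance

theorem memLp_two_stdGaussian (d : ℕ) : MemLp id 2 (stdGaussian d) := by
  rw [stdGaussian, ProbabilityTheory.map_pi_eq_stdGaussian]
  exact ProbabilityTheory.IsGaussian.memLp_two_id

/-- **Differentiability and smoothness of the μ-smooth approximation.**
If `f` has `L`-Lipschitz gradient, then the μ-smooth approximation
`f_μ(x) = ∫ f (x + μ • u) dγ_d(u)` has at every `x` the gradient
`∫ ∇f (x + μ • u) dγ_d(u)`, and this gradient is `L`-Lipschitz; in particular `f_μ` also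
has `L`-Lipschitz gradient. -/
theorem smooth_approximation_gradient
    (d : ℕ) (L μ : ℝ) (hL : 0 ≤ L)
    (f : EuclideanSpace ℝ (Fin d) → ℝ)
    (hdiff : Differentiable ℝ f)
    (hlip : ∀ x y, ‖gradient f x - gradient f y‖ ≤ L * ‖x - y‖) :
    (∀ x : EuclideanSpace ℝ (Fin d),
      HasGradientAt (fun y => ∫ u, f (y + μ • u) ∂(stdGaussian d))
        (∫ u, gradient f (x + μ • u) ∂(stdGaussian d)) x) ∧
    (∀ x y : EuclideanSpace ℝ (Fin d),
      ‖(∫ u, gradient f (x + μ • u) ∂(stdGaussian d)) -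
          ∫ u, gradient f (y + μ • u) ∂(stdGaussian d)‖ ≤ L * ‖x - y‖) := by
  have hK : LipschitzWith ⟨L, hL⟩ (gradient f) :=
    LipschitzWith.of_dist_le_mul fun x y => by rw [dist_eq_norm, dist_eq_norm]; exact hlip x y
  have hs : MemLp (fun u => μ • u) 2 (stdGaussian d) := (memLp_two_stdGaussian d).const_smul μ
  exact ⟨hasGradientAt_integral_comp_add hdiff hK hs,
    (hK.integral_comp_add (hs.integrable one_le_two)).norm_sub_le⟩
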